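/- Let M=(E,𝓘) be a matroid with m = r_M(E), let X be a totally ordered set, let ℓ : E → X be a labeling function, and let 𝔎 be a set of broken circuits of M (not necessarily all of them). Then χ̃_M = Σ_{F ⊆ E, F 𝔎-free} (−1)^{|F|} x^{m − r_M(F)} in ℤ[x]. -/
import Mathlib


open scoped Classical

noncomputable section

/-- The rank function of the matroid `(E, 𝓘)` (with ground set the whole type `α`):
`r_M(S) = max { |Z| : Z ∈ 𝓘, Z ⊆ S }`. -/
def mrank {α : Type*} [DecidableEq α] (𝓘 : Finset (Finset α)) (S : Finset α) : ℕ :=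
  (𝓘.filter fun Z => Z ⊆ S).sup Finset.card

/-- `T` is a flat of the matroid `(E, 𝓘)`: for some `k`, the set `T` has rank `k` and is
maximal (under inclusion) among subsets of the ground set of rank `k`. -/
def IsFlat {α : Type*} [DecidableEq α] (𝓘 : Finset (Finset α)) (T : Finset α) : Prop :=
  ∃ k, mrank 𝓘 T = k ∧ ∀ W : Finset α, mrank 𝓘 W = k → T ⊆ W → W = T

/-- `C` is a circuit of the matroid `(E, 𝓘)`: a minimal element of `𝒫(E) ∖ 𝓘`. -/
def IsCircuitM {α : Type*} (𝓘 : Finset (Finset α)) (C : Finset α) : Prop :=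
  C ∉ 𝓘 ∧ ∀ D : Finset α, D ∉ 𝓘 → D ⊆ C → D = C

/-- The closure `T̄` of `T`: the intersection of all flats of the matroid containing
`T`. -/
def mclosure {α : Type*} [Fintype α] [DecidableEq α] (𝓘 : Finset (Finset α))
    (T : Finset α) : Finset α :=
  Finset.univ.filter fun x => ∀ G : Finset α, IsFlat 𝓘 G → T ⊆ G → x ∈ G

/-- A broken circuit of the matroid `(E, 𝓘)` (with respect to the labeling function
`ℓ`): a set of the form `C \ {e}`, where `C` is a circuit of `M` and `e` is the unique
element of `C` attaining the maximum label among the elements of `C`. -/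
def IsBrokenCircuitM {α X : Type*} [LinearOrder X] (𝓘 : Finset (Finset α))
    (ℓ : α → X) (K : Finset α) : Prop :=
  ∃ C e, IsCircuitM 𝓘 C ∧ e ∈ C ∧ (∀ e' ∈ C, e' ≠ e → ℓ e' < ℓ e) ∧ K = C.erase e

set_option linter.unusedSectionVars false

section Rank
variable {α : Type*} [DecidableEq α] (𝓘 : Finset (Finset α))

lemma mrank_mono {S T : Finset α} (h : S ⊆ T) : mrank 𝓘 S ≤ mrank 𝓘 T := by
  apply Finset.sup_le
  intro Z hZ
  simp only [Finset.mem_filter] at hZ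
  exact Finset.le_sup (f := Finset.card) (Finset.mem_filter.2 ⟨hZ.1, hZ.2.trans h⟩)

lemma card_le_mrank {Z S : Finset α} (hZ : Z ∈ 𝓘) (hZS : Z ⊆ S) : Z.card ≤ mrank 𝓘 S :=
  Finset.le_sup (f := Finset.card) (Finset.mem_filter.2 ⟨hZ, hZS⟩)

variable (h1 : ∅ ∈ 𝓘)
include h1

lemma exists_basis (S : Finset α) : ∃ B ∈ 𝓘, B ⊆ S ∧ B.card = mrank 𝓘 S := by
  obtain ⟨B, hB, hBc⟩ := Finset.exists_mem_eq_sup (𝓘.filter fun Z => Z ⊆ S)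
    ⟨∅, Finset.mem_filter.2 ⟨h1, Finset.empty_subset _⟩⟩ Finset.card
  simp only [Finset.mem_filter] at hB
  exact ⟨B, hB.1, hB.2, hBc.symm⟩

lemma mrank_empty : mrank 𝓘 ∅ = 0 := by
  apply Nat.le_antisymm _ (Nat.zero_le _)
  apply Finset.sup_le
  intro Z hZ
  simp only [Finset.mem_filter, Finset.subset_empty] at hZ
  simp [hZ.2]

omit h1 in
lemma mrank_of_indep {Z : Finset α} (hZ : Z ∈ 𝓘) : mrank 𝓘 Z = Z.card := by
  apply Nat.le_antisymm
  · apply Finset.sup_le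
    intro W hW
    simp only [Finset.mem_filter] at hW
    exact Finset.card_le_card hW.2
  · exact card_le_mrank 𝓘 hZ subset_rfl

variable (h2 : ∀ Y ∈ 𝓘, ∀ Z : Finset α, Z ⊆ Y → Z ∈ 𝓘)
  (h3 : ∀ Y ∈ 𝓘, ∀ Z ∈ 𝓘, Y.card < Z.card → ∃ x ∈ Z \ Y, insert x Y ∈ 𝓘)
include h2 h3

/-- Any independent subset of `S` extends to a basis of `S`. -/
lemma exists_basis_superset {B S : Finset α} (hB : B ∈ 𝓘) (hBS : B ⊆ S) :
    ∃ B' ∈ 𝓘, B ⊆ B' ∧ B' ⊆ S ∧ B'.card = mrank 𝓘 S := by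
  obtain ⟨Z, hZ, hZS, hZc⟩ := exists_basis 𝓘 h1 S
  -- induct on mrank 𝓘 S - B.card
  have H : ∀ n (B : Finset α), B ∈ 𝓘 → B ⊆ S → mrank 𝓘 S - B.card ≤ n →
      ∃ B' ∈ 𝓘, B ⊆ B' ∧ B' ⊆ S ∧ B'.card = mrank 𝓘 S := by
    intro n
    induction n with
    | zero =>
      intro B hB hBS hn
      refine ⟨B, hB, subset_rfl, hBS, ?_⟩
      have := card_le_mrank 𝓘 hB hBS
      omega
    | succ n ih =>
      intro B hB hBS hn
      by_cases hlt : B.card < mrank 𝓘 S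
      · rw [← hZc] at hlt
        obtain ⟨x, hx, hxB⟩ := h3 B hB Z hZ hlt
        simp only [Finset.mem_sdiff] at hx
        have hcard : (insert x B).card = B.card + 1 := Finset.card_insert_of_notMem hx.2
        obtain ⟨B', hB', h1', h2', h3'⟩ := ih (insert x B) hxB
          (Finset.insert_subset (hZS hx.1) hBS) (by omega)
        exact ⟨B', hB', (Finset.subset_insert _ _).trans h1', h2', h3'⟩
      · have := card_le_mrank 𝓘 hB hBS
        exact ⟨B, hB, subset_rfl, hBS, by omega⟩
  exact H (mrank 𝓘 S) B hB hBS (by omega)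

/-- Key lemma: if `e` is spanned by `S ⊆ F`, then adding `e` to `F` doesn't change rank. -/
lemma spanned_insert {S F : Finset α} (e : α) (hSF : S ⊆ F)
    (hS : mrank 𝓘 (insert e S) = mrank 𝓘 S) :
    mrank 𝓘 (insert e F) = mrank 𝓘 F := by
  by_cases heF : e ∈ F
  · rw [Finset.insert_eq_self.2 heF]
  apply Nat.le_antisymm _ (mrank_mono 𝓘 (Finset.subset_insert _ _))
  by_contra hgt
  push_neg at hgt
  obtain ⟨B, hB, hBS, hBc⟩ := exists_basis 𝓘 h1 S
  obtain ⟨B', hB', hBB', hB'F, hB'c⟩ := exists_basis_superset 𝓘 h1 h2 h3 hB (hBS.trans hSF)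
  have heB' : e ∉ B' := fun h => heF (hB'F h)
  have heB : e ∉ B := fun h => heF (hSF (hBS h))
  -- get a basis Z of insert e F with bigger card
  obtain ⟨Z, hZ, hZF, hZc⟩ := exists_basis 𝓘 h1 (insert e F)
  have hlt : B'.card < Z.card := by rw [hB'c, hZc]; exact hgt
  obtain ⟨x, hx, hxB'⟩ := h3 B' hB' Z hZ hlt
  simp only [Finset.mem_sdiff] at hx
  rcases Finset.mem_insert.1 (hZF hx.1) with hxe | hxF
  · subst hxe
    -- insert x B' independent; hence insert x B independent, contradicting hS
    have hxB : insert x B ∈ 𝓘 := h2 _ hxB' _ (Finset.insert_subset_insert _ hBB')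
    have : (insert x B).card ≤ mrank 𝓘 (insert x S) :=
      card_le_mrank 𝓘 hxB (Finset.insert_subset_insert _ hBS)
    rw [Finset.card_insert_of_notMem heB, hS, ← hBc] at this
    omega
  · have : (insert x B').card ≤ mrank 𝓘 F :=
      card_le_mrank 𝓘 hxB' (Finset.insert_subset hxF hB'F)
    rw [Finset.card_insert_of_notMem hx.2, hB'c] at this
    omega

lemma mrank_union_spanned {S T : Finset α} (hT : ∀ x ∈ T, mrank 𝓘 (insert x S) = mrank 𝓘 S) :
    mrank 𝓘 (S ∪ T) = mrank 𝓘 S := by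
  induction T using Finset.induction with
  | empty => rw [Finset.union_empty]
  | @insert a T ha ih =>
    have h' : mrank 𝓘 (S ∪ T) = mrank 𝓘 S := ih fun x hx => hT x (Finset.mem_insert_of_mem hx)
    have : mrank 𝓘 (insert a (S ∪ T)) = mrank 𝓘 (S ∪ T) := by
      apply spanned_insert 𝓘 h1 h2 h3 a Finset.subset_union_left
      rw [hT a (Finset.mem_insert_self _ _)]
    rw [Finset.union_insert, this]
    exact h'

end Rank

section Closure
variable {α : Type*} [Fintype α] [DecidableEq α] (𝓘 : Finset (Finset α))
  (h1 : ∅ ∈ 𝓘)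
  (h2 : ∀ Y ∈ 𝓘, ∀ Z : Finset α, Z ⊆ Y → Z ∈ 𝓘)
  (h3 : ∀ Y ∈ 𝓘, ∀ Z ∈ 𝓘, Y.card < Z.card → ∃ x ∈ Z \ Y, insert x Y ∈ 𝓘)
include h1 h2 h3

def mspan (S : Finset α) : Finset α :=
  Finset.univ.filter fun x => mrank 𝓘 (insert x S) = mrank 𝓘 S

omit h1 h2 h3 in
lemma subset_mspan (S : Finset α) : S ⊆ mspan 𝓘 S := by
  intro x hx
  simp only [mspan, Finset.mem_filter, Finset.mem_univ, true_and]
  rw [Finset.insert_eq_self.2 hx]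

lemma mrank_mspan (S : Finset α) : mrank 𝓘 (mspan 𝓘 S) = mrank 𝓘 S := by
  have : mspan 𝓘 S = S ∪ mspan 𝓘 S := by
    rw [Finset.union_eq_right.2 (subset_mspan 𝓘 S)]
  rw [this]
  apply mrank_union_spanned 𝓘 h1 h2 h3
  intro x hx
  simpa [mspan] using hx

lemma isFlat_mspan (S : Finset α) : IsFlat 𝓘 (mspan 𝓘 S) := by
  refine ⟨mrank 𝓘 S, mrank_mspan 𝓘 h1 h2 h3 S, ?_⟩
  intro W hW hsub
  apply Finset.Subset.antisymm _ hsub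
  intro x hx
  simp only [mspan, Finset.mem_filter, Finset.mem_univ, true_and]
  apply Nat.le_antisymm
  · have hle : mrank 𝓘 (insert x S) ≤ mrank 𝓘 W := by
      apply mrank_mono
      exact Finset.insert_subset hx ((subset_mspan 𝓘 S).trans hsub)
    rw [hW] at hle
    exact hle
  · exact mrank_mono 𝓘 (Finset.subset_insert _ _)

lemma mspan_subset_flat {S F : Finset α} (hF : IsFlat 𝓘 F) (hSF : S ⊆ F) :
    mspan 𝓘 S ⊆ F := by
  obtain ⟨k, hk, hmax⟩ := hF
  intro x hx
  simp only [mspan, Finset.mem_filter, Finset.mem_univ, true_and] at hx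
  have : mrank 𝓘 (insert x F) = mrank 𝓘 F := spanned_insert 𝓘 h1 h2 h3 x hSF hx
  have := hmax (insert x F) (by rw [this, hk]) (Finset.subset_insert _ _)
  rw [← this]
  exact Finset.mem_insert_self _ _

lemma mclosure_eq_mspan (S : Finset α) : mclosure 𝓘 S = mspan 𝓘 S := by
  apply Finset.Subset.antisymm
  · intro x hx
    simp only [mclosure, Finset.mem_filter, Finset.mem_univ, true_and] at hx
    exact hx _ (isFlat_mspan 𝓘 h1 h2 h3 S) (subset_mspan 𝓘 S)
  · intro x hx
    simp only [mclosure, Finset.mem_filter, Finset.mem_univ, true_and]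
    intro G hG hSG
    exact mspan_subset_flat 𝓘 h1 h2 h3 hG hSG hx

lemma subset_mclosure (S : Finset α) : S ⊆ mclosure 𝓘 S := by
  rw [mclosure_eq_mspan 𝓘 h1 h2 h3]; exact subset_mspan 𝓘 S

lemma isFlat_mclosure (S : Finset α) : IsFlat 𝓘 (mclosure 𝓘 S) := by
  rw [mclosure_eq_mspan 𝓘 h1 h2 h3]; exact isFlat_mspan 𝓘 h1 h2 h3 S

lemma mrank_mclosure (S : Finset α) : mrank 𝓘 (mclosure 𝓘 S) = mrank 𝓘 S := by
  rw [mclosure_eq_mspan 𝓘 h1 h2 h3]; exact mrank_mspan 𝓘 h1 h2 h3 S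

lemma mclosure_subset_flat {S F : Finset α} (hF : IsFlat 𝓘 F) (hSF : S ⊆ F) :
    mclosure 𝓘 S ⊆ F := by
  rw [mclosure_eq_mspan 𝓘 h1 h2 h3]; exact mspan_subset_flat 𝓘 h1 h2 h3 hF hSF

lemma mclosure_flat_self {F : Finset α} (hF : IsFlat 𝓘 F) : mclosure 𝓘 F = F :=
  Finset.Subset.antisymm (mclosure_subset_flat 𝓘 h1 h2 h3 hF subset_rfl)
    (subset_mclosure 𝓘 h1 h2 h3 F)

end Closure

lemma erase_eq_erase {β : Type*} (i j : DecidableEq β) (s : Finset β) (a : β) :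
    @Finset.erase β i s a = @Finset.erase β j s a := by
  have : i = j := by
    funext x y
    exact Subsingleton.elim _ _
  rw [this]

section Sums
variable {α : Type*} [Fintype α] [DecidableEq α] (𝓘 : Finset (Finset α))
  (h1 : ∅ ∈ 𝓘)
  (h2 : ∀ Y ∈ 𝓘, ∀ Z : Finset α, Z ⊆ Y → Z ∈ 𝓘)
  (h3 : ∀ Y ∈ 𝓘, ∀ Z ∈ 𝓘, Y.card < Z.card → ∃ x ∈ Z \ Y, insert x Y ∈ 𝓘)

omit h1 h2 h3 in
lemma toggle_sum_zero (s : Finset (Finset α)) (e : α)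
    (hmem : ∀ F ∈ s, (if e ∈ F then F.erase e else insert e F) ∈ s)
    (hrank : ∀ F ∈ s, e ∉ F → mrank 𝓘 (insert e F) = mrank 𝓘 F) :
    ∑ F ∈ s, (-1 : Polynomial ℤ) ^ F.card *
      Polynomial.X ^ (mrank 𝓘 Finset.univ - mrank 𝓘 F) = 0 := by
  have g_mem : ∀ F (hF : F ∈ s), (if e ∈ F then F.erase e else insert e F) ∈ s := hmem
  apply Finset.sum_involution (fun F _ => if e ∈ F then F.erase e else insert e F) ?_ ?_ g_mem ?_
  · intro F hF
    by_cases he : e ∈ F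
    · rw [if_pos he]
      have hm := hmem F hF; rw [if_pos he] at hm
      have hre : mrank 𝓘 (F.erase e) = mrank 𝓘 F := by
        have := hrank (F.erase e) hm (Finset.notMem_erase e F)
        rw [Finset.insert_erase he] at this
        exact this.symm
      have hc : (F.erase e).card + 1 = F.card := Finset.card_erase_add_one he
      rw [hre, ← hc, pow_succ]
      ring
    · rw [if_neg he]
      have hre : mrank 𝓘 (insert e F) = mrank 𝓘 F := hrank F hF he
      have hc : (insert e F).card = F.card + 1 := Finset.card_insert_of_notMem he
      rw [hre, hc, pow_succ]
      ring
  · intro F hF _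
    by_cases he : e ∈ F
    · rw [if_pos he]
      intro h
      apply Finset.notMem_erase e F
      rw [h]
      exact he
    · rw [if_neg he]
      intro h
      apply he
      rw [← h]
      exact Finset.mem_insert_self e F
  · intro F hF
    by_cases he : e ∈ F
    · simp [he, Finset.notMem_erase, Finset.insert_erase he]
    · simp [he, Finset.erase_insert he]

omit h1 h2 h3 in
lemma mrank_brokenCircuit_indep {C : Finset α} {e : α} (hC : IsCircuitM 𝓘 C) (he : e ∈ C) :
    C.erase e ∈ 𝓘 := by
  by_contra h
  have h' := hC.2 _ h (Finset.erase_subset _ _)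
  exact (h' ▸ Finset.notMem_erase e C) he

omit h1 h2 h3 in
lemma mrank_insert_brokenCircuit {C : Finset α} {e : α} (hC : IsCircuitM 𝓘 C) (he : e ∈ C) :
    mrank 𝓘 (insert e (C.erase e)) = mrank 𝓘 (C.erase e) := by
  rw [Finset.insert_erase he]
  have hK : C.erase e ∈ 𝓘 := mrank_brokenCircuit_indep 𝓘 hC he
  rw [mrank_of_indep 𝓘 hK]
  apply Nat.le_antisymm
  · apply Finset.sup_le
    intro Z hZ
    simp only [Finset.mem_filter] at hZ
    have hne : Z ≠ C := fun h => hC.1 (h ▸ hZ.1)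
    have hlt : Z.card < C.card := Finset.card_lt_card (Finset.ssubset_iff_subset_ne.2 ⟨hZ.2, hne⟩)
    rw [Finset.card_erase_of_mem he]
    omega
  · exact card_le_mrank 𝓘 hK (Finset.erase_subset _ _)

include h1 h2 h3 in
lemma sum_free_eq_sum_univ {X : Type*} [LinearOrder X] (ℓ : α → X) :
    ∀ (n : ℕ) (𝔎 : Finset (Finset α)), 𝔎.card = n →
    (∀ K ∈ 𝔎, IsBrokenCircuitM 𝓘 ℓ K) →
    ∑ F ∈ Finset.univ.filter (fun F : Finset α => ∀ K ∈ 𝔎, ¬ K ⊆ F),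
        (-1 : Polynomial ℤ) ^ F.card *
          Polynomial.X ^ (mrank 𝓘 Finset.univ - mrank 𝓘 F) =
    ∑ F ∈ (Finset.univ : Finset (Finset α)),
        (-1 : Polynomial ℤ) ^ F.card *
          Polynomial.X ^ (mrank 𝓘 Finset.univ - mrank 𝓘 F) := by
  intro n
  induction n with
  | zero =>
    intro 𝔎 hc _
    rw [Finset.card_eq_zero.1 hc]
    simp
  | succ n ih =>
    intro 𝔎 hc h𝔎
    have hne : 𝔎.Nonempty := Finset.card_pos.1 (by omega)
    -- choose K₀ with maximal label of its distinguished element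
    obtain ⟨K₀, _, hmax⟩ := Finset.exists_max_image 𝔎.attach
      (fun K => ℓ ((h𝔎 K.1 K.2).choose_spec.choose))
      (Finset.attach_nonempty_iff.2 hne)
    set C₀ := (h𝔎 K₀.1 K₀.2).choose with hC₀def
    set e₀ := (h𝔎 K₀.1 K₀.2).choose_spec.choose with he₀def
    have spec₀ := (h𝔎 K₀.1 K₀.2).choose_spec.choose_spec
    obtain ⟨hcirc₀, hmem₀, hmax₀, hKeq₀'⟩ := spec₀
    have hKeq₀ : K₀.1 = C₀.erase e₀ := hKeq₀'.trans (erase_eq_erase _ _ _ _)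
    have he₀K : e₀ ∉ K₀.1 := by rw [hKeq₀]; exact Finset.notMem_erase _ _
    -- split the 𝔎-free sum
    have hsplit : Finset.univ.filter (fun F : Finset α => ∀ K ∈ 𝔎, ¬ K ⊆ F) =
        (Finset.univ.filter (fun F : Finset α => ∀ K ∈ 𝔎.erase K₀.1, ¬ K ⊆ F)).filter
          (fun F => ¬ K₀.1 ⊆ F) := by
      rw [Finset.filter_filter]
      apply Finset.filter_congr
      intro F _
      constructor
      · intro h
        exact ⟨fun K hK => h K (Finset.mem_of_mem_erase hK), h K₀.1 K₀.2⟩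
      · intro ⟨h, h0⟩ K hK
        by_cases hKK : K = K₀.1
        · rw [hKK]; exact h0
        · exact h K (Finset.mem_erase.2 ⟨hKK, hK⟩)
    have hzero : ∑ F ∈ (Finset.univ.filter
          (fun F : Finset α => ∀ K ∈ 𝔎.erase K₀.1, ¬ K ⊆ F)).filter
          (fun F => K₀.1 ⊆ F),
        (-1 : Polynomial ℤ) ^ F.card *
          Polynomial.X ^ (mrank 𝓘 Finset.univ - mrank 𝓘 F) = 0 := by
      apply toggle_sum_zero 𝓘 _ e₀
      · intro F hF
        simp only [Finset.mem_filter, Finset.mem_univ, true_and] at hF ⊢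
        obtain ⟨hfree, hK₀F⟩ := hF
        by_cases he : e₀ ∈ F
        · rw [if_pos he]
          refine ⟨fun K hK hsub => hfree K hK (hsub.trans (Finset.erase_subset _ _)), ?_⟩
          exact Finset.subset_erase.2 ⟨hK₀F, he₀K⟩
        · rw [if_neg he]
          refine ⟨fun K hK hsub => ?_, hK₀F.trans (Finset.subset_insert _ _)⟩
          have hKmem : K ∈ 𝔎 := Finset.mem_of_mem_erase hK
          by_cases he₀K' : e₀ ∈ K
          · -- e₀ ∈ K means ℓ e₀ < ℓ e_K ≤ ℓ e₀, contradiction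
            set CK := (h𝔎 K hKmem).choose with hCK
            set eK := (h𝔎 K hKmem).choose_spec.choose with heK
            have specK := (h𝔎 K hKmem).choose_spec.choose_spec
            obtain ⟨hcircK, hmemK, hmaxK, hKeqK0⟩ := specK
            have hKeqK : K = CK.erase eK := hKeqK0.trans (erase_eq_erase _ _ _ _)
            rw [hKeqK] at he₀K'
            have h1' : e₀ ∈ CK := Finset.mem_of_mem_erase he₀K'
            have h2' : e₀ ≠ eK := Finset.ne_of_mem_erase he₀K'
            have hlt : ℓ e₀ < ℓ eK := hmaxK e₀ h1' h2'
            have hle : ℓ eK ≤ ℓ e₀ := hmax ⟨K, hKmem⟩ (Finset.mem_attach _ _)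
            exact absurd hle (not_le.2 hlt)
          · exact hfree K hK fun x hx => by
              rcases Finset.mem_insert.1 (hsub hx) with h | h
              · exact absurd (h ▸ hx) he₀K'
              · exact h
      · intro F hF he
        simp only [Finset.mem_filter, Finset.mem_univ, true_and] at hF
        apply spanned_insert 𝓘 h1 h2 h3 e₀ hF.2
        rw [hKeq₀]
        exact mrank_insert_brokenCircuit 𝓘 hcirc₀ hmem₀
    have hcard' : (𝔎.erase K₀.1).card = n := by
      rw [Finset.card_erase_of_mem K₀.2]; omega
    have hih := ih (𝔎.erase K₀.1) hcard'
      (fun K hK => h𝔎 K (Finset.mem_of_mem_erase hK))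
    rw [hsplit, ← hih]
    have := Finset.sum_filter_add_sum_filter_not
      (Finset.univ.filter (fun F : Finset α => ∀ K ∈ 𝔎.erase K₀.1, ¬ K ⊆ F))
      (fun F => K₀.1 ⊆ F)
      (fun F => (-1 : Polynomial ℤ) ^ F.card *
          Polynomial.X ^ (mrank 𝓘 Finset.univ - mrank 𝓘 F))
    rw [hzero, zero_add] at this
    exact this

end Sums

def Nfib {α : Type*} [Fintype α] [DecidableEq α] (𝓘 : Finset (Finset α)) (G : Finset α) : ℤ :=
  ∑ S ∈ Finset.univ.filter (fun S : Finset α => mclosure 𝓘 S = G), (-1 : ℤ) ^ S.card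

section Whitney
variable {α : Type*} [Fintype α] [DecidableEq α] (𝓘 : Finset (Finset α))
  (h1 : ∅ ∈ 𝓘)
  (h2 : ∀ Y ∈ 𝓘, ∀ Z : Finset α, Z ⊆ Y → Z ∈ 𝓘)
  (h3 : ∀ Y ∈ 𝓘, ∀ Z ∈ 𝓘, Y.card < Z.card → ∃ x ∈ Z \ Y, insert x Y ∈ 𝓘)
include h1 h2 h3

lemma sum_N_flats {F : Finset α} (hF : IsFlat 𝓘 F) :
    ∑ G ∈ Finset.univ.filter (fun G : Finset α => IsFlat 𝓘 G ∧ G ⊆ F), Nfib 𝓘 G =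
      if F = ∅ then 1 else 0 := by
  have hmaps : ∀ S ∈ F.powerset, mclosure 𝓘 S ∈
      Finset.univ.filter (fun G : Finset α => IsFlat 𝓘 G ∧ G ⊆ F) := by
    intro S hS
    simp only [Finset.mem_filter, Finset.mem_univ, true_and]
    exact ⟨isFlat_mclosure 𝓘 h1 h2 h3 S,
      mclosure_subset_flat 𝓘 h1 h2 h3 hF (Finset.mem_powerset.1 hS)⟩
  have hfib := Finset.sum_fiberwise_of_maps_to hmaps (fun S => (-1 : ℤ) ^ S.card)
  rw [← Finset.sum_powerset_neg_one_pow_card, ← hfib]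
  apply Finset.sum_congr rfl
  intro G hG
  simp only [Finset.mem_filter, Finset.mem_univ, true_and] at hG
  unfold Nfib
  apply Finset.sum_congr _ (fun _ _ => rfl)
  ext S
  simp only [Finset.mem_filter, Finset.mem_powerset, Finset.mem_univ, true_and]
  constructor
  · intro h
    refine ⟨?_, h⟩
    have hs := subset_mclosure 𝓘 h1 h2 h3 S
    rw [h] at hs
    exact hs.trans hG.2
  · exact fun h => h.2

lemma isFlat_empty (h0 : mclosure 𝓘 ∅ = ∅) : IsFlat 𝓘 (∅ : Finset α) := by
  refine ⟨0, mrank_empty 𝓘 h1, ?_⟩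
  intro W hW _
  rw [Finset.eq_empty_iff_forall_notMem]
  intro x hx
  have hx0 : mrank 𝓘 {x} = 0 := by
    have := mrank_mono 𝓘 (Finset.singleton_subset_iff.2 hx)
    omega
  have : x ∈ mclosure 𝓘 ∅ := by
    rw [mclosure_eq_mspan 𝓘 h1 h2 h3]
    simp only [mspan, Finset.mem_filter, Finset.mem_univ, true_and]
    have hins : (insert x ∅ : Finset α) = {x} := rfl
    rw [hins, hx0, mrank_empty 𝓘 h1]
  rw [h0] at this
  exact absurd this (Finset.notMem_empty x)

lemma Nfib_empty (h0 : mclosure 𝓘 ∅ = ∅) : Nfib 𝓘 (∅ : Finset α) = 1 := by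
  unfold Nfib
  have : Finset.univ.filter (fun S : Finset α => mclosure 𝓘 S = ∅) = {∅} := by
    ext S
    simp only [Finset.mem_filter, Finset.mem_univ, true_and, Finset.mem_singleton]
    constructor
    · intro h
      have hs := subset_mclosure 𝓘 h1 h2 h3 S
      rw [h] at hs
      exact Finset.subset_empty.1 hs
    · intro h; rw [h, h0]
  rw [this]
  simp

lemma mu_eq_Nfib (h0 : mclosure 𝓘 ∅ = ∅)
    (μ : Finset α → Finset α → ℤ)
    (hμ1 : ∀ T : Finset α, IsFlat 𝓘 T → μ T T = 1)
    (hμ2 : ∀ T S : Finset α, IsFlat 𝓘 T → IsFlat 𝓘 S → T ⊂ S →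
      μ T S = -∑ Z ∈ Finset.univ.filter (fun Z : Finset α => IsFlat 𝓘 Z ∧ T ⊆ Z ∧ Z ⊂ S),
        μ T Z) :
    ∀ F : Finset α, IsFlat 𝓘 F → μ ∅ F = Nfib 𝓘 F := by
  have key : ∀ (n : ℕ) (F : Finset α), F.card ≤ n → IsFlat 𝓘 F → μ ∅ F = Nfib 𝓘 F := by
    intro n
    induction n with
    | zero =>
      intro F hc hF
      have hFe : F = ∅ := Finset.card_eq_zero.1 (by omega)
      subst hFe
      rw [hμ1 ∅ hF, Nfib_empty 𝓘 h1 h2 h3 h0]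
    | succ n ih =>
      intro F hc hF
      by_cases hFe : F = ∅
      · subst hFe
        rw [hμ1 ∅ hF, Nfib_empty 𝓘 h1 h2 h3 h0]
      · have hssub : (∅ : Finset α) ⊂ F :=
          Finset.ssubset_iff_subset_ne.2 ⟨Finset.empty_subset F, Ne.symm hFe⟩
        rw [hμ2 ∅ F (isFlat_empty 𝓘 h1 h2 h3 h0) hF hssub]
        have hsetEq : Finset.univ.filter
            (fun Z : Finset α => IsFlat 𝓘 Z ∧ (∅ : Finset α) ⊆ Z ∧ Z ⊂ F) =
            (Finset.univ.filter (fun G : Finset α => IsFlat 𝓘 G ∧ G ⊆ F)).erase F := by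
          ext Z
          simp only [Finset.mem_filter, Finset.mem_univ, true_and, Finset.mem_erase]
          constructor
          · intro ⟨hf, _, hss⟩
            exact ⟨hss.ne, hf, hss.subset⟩
          · intro ⟨hne, hf, hsub⟩
            exact ⟨hf, Finset.empty_subset _, Finset.ssubset_iff_subset_ne.2 ⟨hsub, hne⟩⟩
        have hFmem : F ∈ Finset.univ.filter (fun G : Finset α => IsFlat 𝓘 G ∧ G ⊆ F) := by
          simp only [Finset.mem_filter, Finset.mem_univ, true_and]
          exact ⟨hF, subset_rfl⟩
        have hsum := Finset.add_sum_erase _ (Nfib 𝓘) hFmem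
        rw [sum_N_flats 𝓘 h1 h2 h3 hF, if_neg hFe] at hsum
        have hind : ∑ Z ∈ Finset.univ.filter
            (fun Z : Finset α => IsFlat 𝓘 Z ∧ (∅ : Finset α) ⊆ Z ∧ Z ⊂ F), μ ∅ Z =
            ∑ Z ∈ Finset.univ.filter
            (fun Z : Finset α => IsFlat 𝓘 Z ∧ (∅ : Finset α) ⊆ Z ∧ Z ⊂ F), Nfib 𝓘 Z := by
          apply Finset.sum_congr rfl
          intro Z hZ
          simp only [Finset.mem_filter, Finset.mem_univ, true_and] at hZ
          have hlt : Z.card < F.card := Finset.card_lt_card hZ.2.2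
          exact ih Z (by omega) hZ.1
        rw [hind, hsetEq]
        omega
  exact fun F hF => key F.card F le_rfl hF

end Whitney

/-- Let `M = (E, 𝓘)` be a matroid (ground set the whole finite type
`α`), with `m = r_M(E)`; let `ℓ` be a labeling function and `𝔎` a set of broken
circuits of `M`. Let `μ` be the Möbius function of the poset of flats of `M`. Then the
polynomial `χ̃_M = [∅̄ = ∅] · ∑_{F flat} μ(∅̄, F) x^{m − r_M(F)}` satisfies
`χ̃_M = ∑_{F ⊆ E, F 𝔎-free} (−1)^{|F|} x^{m − r_M(F)}` in `ℤ[x]`, where `F` is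
`𝔎`-free if no `K ∈ 𝔎` satisfies `K ⊆ F`. -/
theorem matroid_charPoly_eq_sum_free_powerset
    {α : Type*} [Fintype α] [DecidableEq α]
    (𝓘 : Finset (Finset α))
    (h1 : ∅ ∈ 𝓘)
    (h2 : ∀ Y ∈ 𝓘, ∀ Z : Finset α, Z ⊆ Y → Z ∈ 𝓘)
    (h3 : ∀ Y ∈ 𝓘, ∀ Z ∈ 𝓘, Y.card < Z.card → ∃ x ∈ Z \ Y, insert x Y ∈ 𝓘)
    {X : Type*} [LinearOrder X] (ℓ : α → X)
    (𝔎 : Finset (Finset α)) (h𝔎 : ∀ K ∈ 𝔎, IsBrokenCircuitM 𝓘 ℓ K)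
    (μ : Finset α → Finset α → ℤ)
    (hμ1 : ∀ T : Finset α, IsFlat 𝓘 T → μ T T = 1)
    (hμ2 : ∀ T S : Finset α, IsFlat 𝓘 T → IsFlat 𝓘 S → T ⊂ S →
      μ T S = -∑ Z ∈ Finset.univ.filter (fun Z : Finset α => IsFlat 𝓘 Z ∧ T ⊆ Z ∧ Z ⊂ S),
        μ T Z) :
    (if mclosure 𝓘 ∅ = (∅ : Finset α) then
        ∑ F ∈ Finset.univ.filter (fun F : Finset α => IsFlat 𝓘 F),
          Polynomial.C (μ (mclosure 𝓘 ∅) F) *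
            Polynomial.X ^ (mrank 𝓘 Finset.univ - mrank 𝓘 F)
      else 0) =
      ∑ F ∈ Finset.univ.filter (fun F : Finset α => ∀ K ∈ 𝔎, ¬ K ⊆ F),
        (-1 : Polynomial ℤ) ^ F.card *
          Polynomial.X ^ (mrank 𝓘 Finset.univ - mrank 𝓘 F) := by
  have hfree := sum_free_eq_sum_univ 𝓘 h1 h2 h3 ℓ 𝔎.card 𝔎 rfl h𝔎
  by_cases h0 : mclosure 𝓘 ∅ = (∅ : Finset α)
  · rw [if_pos h0, hfree, h0]
    have hmu := mu_eq_Nfib 𝓘 h1 h2 h3 h0 μ hμ1 hμ2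
    have step1 : ∑ F ∈ Finset.univ.filter (fun F : Finset α => IsFlat 𝓘 F),
        Polynomial.C (μ ∅ F) * Polynomial.X ^ (mrank 𝓘 Finset.univ - mrank 𝓘 F) =
        ∑ F ∈ Finset.univ.filter (fun F : Finset α => IsFlat 𝓘 F),
          ∑ S ∈ Finset.univ.filter (fun S : Finset α => mclosure 𝓘 S = F),
            (-1 : Polynomial ℤ) ^ S.card *
              Polynomial.X ^ (mrank 𝓘 Finset.univ - mrank 𝓘 S) := by
      apply Finset.sum_congr rfl
      intro F hF
      simp only [Finset.mem_filter, Finset.mem_univ, true_and] at hF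
      rw [hmu F hF]
      unfold Nfib
      rw [map_sum, Finset.sum_mul]
      apply Finset.sum_congr rfl
      intro S hS
      simp only [Finset.mem_filter, Finset.mem_univ, true_and] at hS
      have hr : mrank 𝓘 S = mrank 𝓘 F := by
        rw [← hS, mrank_mclosure 𝓘 h1 h2 h3]
      rw [hr]
      congr 1
      simp
    rw [step1]
    apply Finset.sum_fiberwise_of_maps_to
    intro S _
    simp only [Finset.mem_filter, Finset.mem_univ, true_and]
    exact isFlat_mclosure 𝓘 h1 h2 h3 S
  · rw [if_neg h0]
    obtain ⟨x₀, hx₀⟩ := Finset.nonempty_iff_ne_empty.2 h0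
    have hloop : mrank 𝓘 {x₀} = 0 := by
      rw [mclosure_eq_mspan 𝓘 h1 h2 h3] at hx₀
      simp only [mspan, Finset.mem_filter, Finset.mem_univ, true_and] at hx₀
      have hins : (insert x₀ ∅ : Finset α) = {x₀} := rfl
      rw [hins, mrank_empty 𝓘 h1] at hx₀
      exact hx₀
    have hns : {x₀} ∉ 𝓘 := fun h => by
      have := mrank_of_indep 𝓘 h
      rw [hloop] at this
      simp at this
    by_cases hKe : (∅ : Finset α) ∈ 𝔎
    · have hfe : Finset.univ.filter (fun F : Finset α => ∀ K ∈ 𝔎, ¬ K ⊆ F) = ∅ := by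
        apply Finset.filter_eq_empty_iff.2
        intro F _
        push_neg
        exact ⟨∅, hKe, Finset.empty_subset F⟩
      rw [hfe, Finset.sum_empty]
    · symm
      apply toggle_sum_zero 𝓘 _ x₀
      · intro F hF
        simp only [Finset.mem_filter, Finset.mem_univ, true_and] at hF ⊢
        by_cases he : x₀ ∈ F
        · rw [if_pos he]
          exact fun K hK hsub => hF K hK (hsub.trans (Finset.erase_subset _ _))
        · rw [if_neg he]
          intro K hK hsub
          have hx₀K : x₀ ∉ K := by
            intro hx₀K
            obtain ⟨C, e, hC, heC, _, hKeq'⟩ := h𝔎 K hK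
            have hKeq : K = C.erase e := hKeq'.trans (erase_eq_erase _ _ _ _)
            rw [hKeq] at hx₀K
            have hx₀C : x₀ ∈ C := Finset.mem_of_mem_erase hx₀K
            have hCx : {x₀} = C := hC.2 {x₀} hns (Finset.singleton_subset_iff.2 hx₀C)
            have heX : e = x₀ := by
              have := hCx ▸ heC
              exact Finset.mem_singleton.1 this
            exact Finset.ne_of_mem_erase hx₀K heX.symm
          apply hF K hK
          intro y hy
          rcases Finset.mem_insert.1 (hsub hy) with h | h
          · exact absurd (h ▸ hy) hx₀K
          · exact h
      · intro F _ _
        apply spanned_insert 𝓘 h1 h2 h3 x₀ (Finset.empty_subset F)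
        have hins : (insert x₀ ∅ : Finset α) = {x₀} := rfl
        rw [hins, hloop, mrank_empty 𝓘 h1]
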